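/- arXiv:1802.01281 — 4 statements merged into one kernel-verified Lean document; each statement's English description precedes it below -/
import Mathlib

section
/- For every k ∈ ℕ with ũ_k ≠ 0, the control signal satisfies |u(t)| = 1 for all t ∈ [t_k, t_k + T). -/
/-- Pathwise content of the paper's Lemma 1: for the randomized ternary control law,
whenever the ternary value `ut k` computed at the `k`-th communication attempt is nonzero,
the control signal has magnitude one on `[t k, t k + T)`. -/
theorem stmt0 (Δ T : ℝ) (hT : 0 < T) (hTΔ : T < Δ)
    (t : ℕ → ℝ) (ht : ∀ k : ℕ, t k ∈ Set.Ico ((k : ℝ) * Δ) (((k : ℝ) + 1) * Δ))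
    (ut : ℕ → ℝ) (hut : ∀ k, ut k = -1 ∨ ut k = 0 ∨ ut k = 1)
    (uh : ℕ → ℝ)
    (huh0 : uh 0 = ut 0)
    (huh1 : ∀ k : ℕ, 1 ≤ k → ut k ≠ 0 → uh k = ut k)
    (huh2 : ∀ k : ℕ, 1 ≤ k → ut k = 0 → t k < t (k - 1) + T → uh k = ut (k - 1))
    (huh3 : ∀ k : ℕ, 1 ≤ k → ut k = 0 → t (k - 1) + T ≤ t k → uh k = 0)
    (tt : ℕ → ℝ)
    (htt0 : tt 0 = t 0 + T)
    (htt1 : ∀ k : ℕ, 1 ≤ k → ut k ≠ 0 → tt k = t k + T)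
    (htt2 : ∀ k : ℕ, 1 ≤ k → ut k = 0 → t k < t (k - 1) + T → tt k = t (k - 1) + T)
    (htt3 : ∀ k : ℕ, 1 ≤ k → ut k = 0 → t (k - 1) + T ≤ t k → tt k = t k + T)
    (th : ℕ → ℝ) (hth : ∀ k, th k = min (t (k + 1)) (tt k))
    (u : ℝ → ℝ)
    (hu0 : ∀ s : ℝ, s < t 0 → u s = 0)
    (hu1 : ∀ k : ℕ, ∀ s ∈ Set.Ico (t k) (th k), u s = uh k)
    (hu2 : ∀ k : ℕ, ∀ s ∈ Set.Ico (th k) (t (k + 1)), u s = 0) :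
    ∀ k : ℕ, ut k ≠ 0 → ∀ s ∈ Set.Ico (t k) (t k + T), |u s| = 1 := by
  intro k hk s hs
  obtain ⟨hs1, hs2⟩ := hs
  have httk : tt k = t k + T := by
    rcases Nat.eq_zero_or_pos k with h0 | h1
    · subst h0; exact htt0
    · exact htt1 k h1 hk
  have hval : |ut k| = 1 := by rcases hut k with h | h | h <;> simp [h] at hk ⊢
  by_cases hcase : s < t (k + 1)
  · have hlt : s < th k := by rw [hth k, httk]; exact lt_min hcase hs2
    rw [hu1 k s ⟨hs1, hlt⟩]
    rcases Nat.eq_zero_or_pos k with h0 | h1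
    · subst h0; rw [huh0]; exact hval
    · rw [huh1 k h1 hk]; exact hval
  · push_neg at hcase
    have hk1lt : t (k + 1) < t ((k + 1) - 1) + T := by
      simpa using lt_of_le_of_lt hcase hs2
    have hlt2 : s < t (k + 2) := by
      have h1 := (ht k).2
      have h2 := (ht (k + 2)).1
      push_cast at h1 h2
      linarith
    have h1k : 1 ≤ k + 1 := Nat.le_add_left 1 k
    by_cases h0 : ut (k + 1) = 0
    · have huhk1 : uh (k + 1) = ut k := by simpa using huh2 (k + 1) h1k h0 hk1lt
      have httk1 : tt (k + 1) = t k + T := by simpa using htt2 (k + 1) h1k h0 hk1lt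
      have hlt : s < th (k + 1) := by rw [hth, httk1]; exact lt_min hlt2 hs2
      rw [hu1 (k + 1) s ⟨hcase, hlt⟩, huhk1]; exact hval
    · have httk1 : tt (k + 1) = t (k + 1) + T := htt1 (k + 1) h1k h0
      have hlt3 : s < t (k + 1) + T := by
        have h1 := (ht k).2
        have h2 := (ht (k + 1)).1
        push_cast at h1 h2
        linarith
      have hlt : s < th (k + 1) := by rw [hth, httk1]; exact lt_min hlt2 hlt3
      rw [hu1 (k + 1) s ⟨hcase, hlt⟩, huh1 (k + 1) h1k h0]
      rcases hut (k + 1) with h | h | h <;> simp [h] at h0 ⊢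
end

section
/- Almost surely, the set {k ∈ ℕ : t_k ∉ A} is infinite; equivalently, for every M ∈ ℕ, P[#{k ∈ ℕ : t_k ∉ A} ≥ M] = 1. (Paper's Proposition 3: under deterministic jamming attacks satisfying the duration condition, each agent makes infinitely many successful communication attempts with probability one.) -/
open MeasureTheory
open scoped ENNReal

/-!
The events `{t k ∉ A}` are independent. Since `t k` has density `1/Δ` on its slot
`[kΔ, (k+1)Δ)` and the first `N` slots tile `[0, NΔ)`, the duration condition bounds the
expected number of `k < N` with `t k ∈ A` by `(κ + ρNΔ)/Δ = κ/Δ + ρN`. Hence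
`∑_{k<N} P(t k ∉ A) ≥ (1 - ρ)N - κ/Δ → ∞`, and the second Borel–Cantelli lemma applies.
-/

namespace ProbabilityTheory

variable {Ω : Type*} [MeasurableSpace Ω] {μ : Measure Ω}

theorem iIndepFun.iIndepSet_preimage {ι β : Type*} [MeasurableSpace β] {f : ι → Ω → β}
    (hf : iIndepFun f μ) (hfm : ∀ i, Measurable (f i)) {B : Set β} (hB : MeasurableSet B) :
    iIndepSet (fun i => f i ⁻¹' B) μ := by
  rw [iIndepSet_iff_meas_biInter fun i => hfm i hB]
  exact fun S => hf.meas_biInter fun i _ => ⟨B, hB, rfl⟩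

theorem measure_setOf_infinite_eq_one {s : ℕ → Set Ω} (hsm : ∀ n, MeasurableSet (s n))
    (hs : iIndepSet s μ) (hs' : ∑' n, μ (s n) = ∞) :
    μ {ω | {n | ω ∈ s n}.Infinite} = 1 := by
  rw [← Filter.cofinite.limsup_set_eq, Nat.cofinite_eq_atTop]
  exact measure_limsup_eq_one hsm hs hs'

end ProbabilityTheory

open ProbabilityTheory

theorem sum_range_measure_inter_Ico {α : Type*} [MeasurableSpace α] [LinearOrder α]
    [TopologicalSpace α] [OrderClosedTopology α] [OpensMeasurableSpace α]
    (μ : Measure α) (A : Set α) {a : ℕ → α} (ha : Monotone a) (N : ℕ) :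
    ∑ k ∈ Finset.range N, μ (A ∩ Set.Ico (a k) (a (k + 1)))
      = μ (A ∩ Set.Ico (a 0) (a N)) := by
  induction N with
  | zero => simp
  | succ N ih =>
    rw [Finset.sum_range_succ, ih, ← measure_inter_add_sdiff (A ∩ Set.Ico (a 0) (a (N + 1)))
      (measurableSet_Ico (a := a 0) (b := a N))]
    have h0 := ha (Nat.zero_le N)
    have h1 := ha (Nat.le_succ N)
    congr 2 <;> ext x <;> simp only [Set.mem_inter_iff, Set.mem_sdiff, Set.mem_Ico] <;>
      grind

theorem sum_range_measure_preimage_of_map_eq_smul_restrict {Ω : Type*} [MeasurableSpace Ω]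
    (P : Measure Ω) {A : Set ℝ} (hA : MeasurableSet A) {Δ : ℝ} (hΔ : 0 ≤ Δ)
    {t : ℕ → Ω → ℝ} (hmeas : ∀ k, Measurable (t k))
    (hlaw : ∀ k : ℕ, Measure.map (t k) P
      = (ENNReal.ofReal Δ)⁻¹ • volume.restrict (Set.Ico ((k : ℝ) * Δ) (((k : ℝ) + 1) * Δ)))
    (N : ℕ) :
    ∑ k ∈ Finset.range N, P (t k ⁻¹' A)
      = (ENNReal.ofReal Δ)⁻¹ * volume (A ∩ Set.Ico 0 ((N : ℝ) * Δ)) := by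
  have hslot : ∀ k : ℕ, P (t k ⁻¹' A) = (ENNReal.ofReal Δ)⁻¹ *
      volume (A ∩ Set.Ico ((k : ℝ) * Δ) (((k + 1 : ℕ) : ℝ) * Δ)) := by
    intro k
    rw [← Measure.map_apply (hmeas k) hA, hlaw k, Measure.smul_apply,
      Measure.restrict_apply hA, smul_eq_mul, Nat.cast_succ]
  have hmono : Monotone fun k : ℕ => (k : ℝ) * Δ :=
    fun _ _ hij => mul_le_mul_of_nonneg_right (Nat.cast_le.2 hij) hΔ
  have htile := sum_range_measure_inter_Ico volume A hmono N
  simp only [Nat.cast_zero, zero_mul] at htile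
  simp_rw [hslot, ← Finset.mul_sum, htile]

theorem tsum_one_sub_eq_top_of_sum_range_le {q : ℕ → ℝ≥0∞} {c r : ℝ} (hc : 0 ≤ c) (hr0 : 0 ≤ r) (hr1 : r < 1)
    (h : ∀ N : ℕ, ∑ k ∈ Finset.range N, q k ≤ ENNReal.ofReal (c + r * N)) :
    ∑' k, (1 - q k) = ∞ := by
  by_contra hS
  set S := ∑' k, (1 - q k)
  have hbound : ∀ N : ℕ, (N : ℝ) ≤ c + r * N + S.toReal := by
    intro N
    have hcr : 0 ≤ c + r * N := add_nonneg hc (mul_nonneg hr0 N.cast_nonneg)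
    have hN : (N : ℝ≥0∞) ≤ ENNReal.ofReal (c + r * N) + S :=
      calc (N : ℝ≥0∞) = ∑ k ∈ Finset.range N, 1 := by simp
        _ ≤ ∑ k ∈ Finset.range N, (q k + (1 - q k)) :=
            Finset.sum_le_sum fun k _ => le_add_tsub
        _ = ∑ k ∈ Finset.range N, q k + ∑ k ∈ Finset.range N, (1 - q k) :=
            Finset.sum_add_distrib
        _ ≤ ENNReal.ofReal (c + r * N) + S := add_le_add (h N) (ENNReal.sum_le_tsum _)
    rwa [← ENNReal.ofReal_toReal hS, ← ENNReal.ofReal_add hcr ENNReal.toReal_nonneg,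
      ← ENNReal.ofReal_natCast, ENNReal.ofReal_le_ofReal_iff (by positivity)] at hN
  obtain ⟨N, hN⟩ := exists_nat_gt ((c + S.toReal) / (1 - r))
  rw [div_lt_iff₀ (sub_pos.2 hr1)] at hN
  linarith [hbound N]

/-- Paper's Proposition 3: under deterministic jamming attacks satisfying the
average-duration condition with `ρ < 1`, the independent uniformly-randomized
communication attempt times `t k` avoid the attack set `A` infinitely often, almost surely. -/
theorem stmt2 (κ ρ : ℝ) (hκ : 0 ≤ κ) (hρ0 : 0 < ρ) (hρ1 : ρ < 1)
    (A : Set ℝ) (hA : MeasurableSet A)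
    (hdur : ∀ τ t : ℝ, 0 ≤ τ → τ ≤ t →
      volume (A ∩ Set.Icc τ t) ≤ ENNReal.ofReal (κ + ρ * (t - τ)))
    {Ω : Type*} [MeasurableSpace Ω] (P : Measure Ω) [IsProbabilityMeasure P]
    (Δ : ℝ) (hΔ : 0 < Δ)
    (t : ℕ → Ω → ℝ) (hmeas : ∀ k, Measurable (t k))
    (hindep : ProbabilityTheory.iIndepFun t P)
    (hlaw : ∀ k : ℕ, Measure.map (t k) P
      = (ENNReal.ofReal Δ)⁻¹ • volume.restrict (Set.Ico ((k : ℝ) * Δ) (((k : ℝ) + 1) * Δ))) :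
    P {ω | {k : ℕ | t k ω ∉ A}.Infinite} = 1 := by
  have hhit : ∀ N : ℕ,
      ∑ k ∈ Finset.range N, P (t k ⁻¹' A) ≤ ENNReal.ofReal (κ / Δ + ρ * N) := by
    intro N
    have hvol :
        volume (A ∩ Set.Ico 0 ((N : ℝ) * Δ)) ≤ ENNReal.ofReal (κ + ρ * (N * Δ - 0)) :=
      (measure_mono (Set.inter_subset_inter_right _ Set.Ico_subset_Icc_self)).trans
        (hdur _ _ le_rfl (by positivity))
    calc ∑ k ∈ Finset.range N, P (t k ⁻¹' A)
        = (ENNReal.ofReal Δ)⁻¹ * volume (A ∩ Set.Ico 0 ((N : ℝ) * Δ)) :=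
          sum_range_measure_preimage_of_map_eq_smul_restrict P hA hΔ.le hmeas hlaw N
      _ ≤ ENNReal.ofReal Δ⁻¹ * ENNReal.ofReal (κ + ρ * (N * Δ - 0)) := by
          rw [ENNReal.ofReal_inv_of_pos hΔ]; gcongr
      _ = ENNReal.ofReal (κ / Δ + ρ * N) := by
          rw [← ENNReal.ofReal_mul (by positivity)]; congr 1; field_simp; ring
  have hmiss : ∑' k, P (t k ⁻¹' Aᶜ) = ∞ := by
    simp_rw [Set.preimage_compl, prob_compl_eq_one_sub (hmeas _ hA)]
    exact tsum_one_sub_eq_top_of_sum_range_le (div_nonneg hκ hΔ.le) hρ0.le hρ1 hhit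
  simpa using measure_setOf_infinite_eq_one (fun k => hmeas k hA.compl)
    (hindep.iIndepSet_preimage hmeas hA.compl) hmiss
end

section
/- For every N ≥ 1 and every integer m with 0 ≤ m ≤ N, it holds that P[∑_{k=0}^{N−1} φ_k = m] ≤ (N choose m)·(1 − p)^{N−m}. -/
open MeasureTheory Finset

/-!
The event `∑_{k<N} φ k = m` is covered by the `N choose m` events "`φ` vanishes on `B`", where
`B` is the complement of an `m`-subset of `{0, …, N-1}`. Each of these has probability at most
`(1 - p) ^ #B`: if `n` is the largest index of `B`, the event that `φ` vanishes on the rest of `B`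
is `H (n - 1)`-measurable, and on it `φ n = 0` has conditional probability
`E[1 - φ n | H (n - 1)] ≤ 1 - p`.
-/

section

variable {Ω : Type*} {m m₀ : MeasurableSpace Ω} {μ : Measure Ω}

theorem measureReal_inter_eq_zero_le_of_condExp [IsFiniteMeasure μ] (hm : m ≤ m₀)
    {f : Ω → ℝ} (hf : Measurable f) (hf_int : Integrable f μ) (hf_le : ∀ ω, f ω ≤ 1)
    {p : ℝ} (hp : (fun _ => p) ≤ᵐ[μ] μ[f|m]) {S : Set Ω} (hS : MeasurableSet[m] S) :
    μ.real (S ∩ {ω | f ω = 0}) ≤ (1 - p) * μ.real S := by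
  have hZ : MeasurableSet {ω | f ω = 0} := hf (measurableSet_singleton 0)
  have h_ind : {ω | f ω = 0}.indicator 1 ≤ fun ω => 1 - f ω := by
    intro ω
    by_cases h : f ω = 0 <;> simp [Set.indicator, h, hf_le ω]
  have h_cond : p * μ.real S ≤ ∫ ω in S, f ω ∂μ := by
    rw [← setIntegral_condExp hm hf_int hS, mul_comm, ← smul_eq_mul, ← setIntegral_const]
    exact setIntegral_mono_ae_restrict (integrableOn_const (measure_ne_top μ S))
      integrable_condExp.integrableOn (ae_restrict_of_ae hp)
  calc μ.real (S ∩ {ω | f ω = 0})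
      = ∫ ω in S, {ω | f ω = 0}.indicator 1 ω ∂μ := by
        rw [integral_indicator_one hZ, measureReal_restrict_apply hZ, Set.inter_comm]
    _ ≤ ∫ ω in S, (1 - f ω) ∂μ :=
        integral_mono ((integrable_indicator_iff hZ).2 (integrableOn_const (C := (1 : ℝ))))
          ((integrable_const 1).sub hf_int.restrict) h_ind
    _ = μ.real S - ∫ ω in S, f ω ∂μ := by
        rw [integral_sub (integrable_const 1) hf_int.restrict, setIntegral_const, smul_eq_mul,
          mul_one]
    _ ≤ (1 - p) * μ.real S := by linarith

theorem measureReal_forall_eq_zero_le_pow [IsProbabilityMeasure μ]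
    {G : ℕ → MeasurableSpace Ω} (hG : ∀ n, G n ≤ m₀) {φ : ℕ → Ω → ℝ}
    (hφ_meas : ∀ k n, k < n → Measurable[G n] (φ k)) (hφ_int : ∀ n, Integrable (φ n) μ)
    (hφ_le : ∀ n ω, φ n ω ≤ 1) {p : ℝ} (hp1 : p ≤ 1)
    (hcond : ∀ n, (fun _ => p) ≤ᵐ[μ] μ[φ n|G n]) (B : Finset ℕ) :
    μ.real {ω | ∀ k ∈ B, φ k ω = 0} ≤ (1 - p) ^ #B := by
  induction B using Finset.induction_on_max with
  | empty => simp
  | insert n B hlt ih =>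
    have hS : MeasurableSet[G n] {ω | ∀ k ∈ B, φ k ω = 0} := by
      simp only [Set.ofPred_forall]
      exact Finset.measurableSet_biInter B fun k hk =>
        hφ_meas k n (hlt k hk) (measurableSet_singleton 0)
    have hφn : Measurable (φ n) := (hφ_meas n (n + 1) n.lt_succ_self).mono (hG _) le_rfl
    have h_insert : {ω | ∀ k ∈ insert n B, φ k ω = 0} =
        {ω | ∀ k ∈ B, φ k ω = 0} ∩ {ω | φ n ω = 0} := by
      ext ω; simp [and_comm]
    rw [h_insert, card_insert_of_notMem fun h => (hlt n h).false, pow_succ']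
    calc _ ≤ (1 - p) * μ.real {ω | ∀ k ∈ B, φ k ω = 0} :=
          measureReal_inter_eq_zero_le_of_condExp (hG n) hφn (hφ_int n) (hφ_le n) (hcond n) hS
      _ ≤ (1 - p) * (1 - p) ^ #B := mul_le_mul_of_nonneg_left ih (sub_nonneg.2 hp1)

theorem setOf_sum_eq_subset_biUnion {φ : ℕ → Ω → ℝ} (hφ : ∀ k ω, φ k ω = 0 ∨ φ k ω = 1)
    (s : Finset ℕ) (j : ℕ) :
    {ω | ∑ k ∈ s, φ k ω = j} ⊆
      ⋃ A ∈ s.powersetCard j, {ω | ∀ k ∈ s \ A, φ k ω = 0} := by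
  intro ω hω
  classical
  set A := s.filter fun k => φ k ω = 1
  have hA : #A = j := by
    have hsum : ∑ k ∈ s, φ k ω = #A := by
      rw [← sum_boole]
      exact sum_congr rfl fun k _ => by rcases hφ k ω with h | h <;> simp [h]
    exact_mod_cast hsum.symm.trans hω
  simp only [Set.mem_iUnion, Set.mem_ofPred_eq]
  refine ⟨A, mem_powersetCard.2 ⟨filter_subset _ _, hA⟩, fun k hk => ?_⟩
  obtain ⟨hks, hkA⟩ := mem_sdiff.1 hk
  exact (hφ k ω).resolve_right fun h => hkA (mem_filter.2 ⟨hks, h⟩)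

theorem measureReal_sum_eq_le [IsFiniteMeasure μ] {φ : ℕ → Ω → ℝ}
    (hφ : ∀ k ω, φ k ω = 0 ∨ φ k ω = 1) {q : ℝ}
    (hq : ∀ B : Finset ℕ, μ.real {ω | ∀ k ∈ B, φ k ω = 0} ≤ q ^ #B) (s : Finset ℕ) (j : ℕ) :
    μ.real {ω | ∑ k ∈ s, φ k ω = j} ≤ (#s).choose j * q ^ (#s - j) :=
  calc _ ≤ μ.real (⋃ A ∈ s.powersetCard j, {ω | ∀ k ∈ s \ A, φ k ω = 0}) :=
        measureReal_mono (setOf_sum_eq_subset_biUnion hφ s j) (measure_ne_top _ _)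
    _ ≤ ∑ A ∈ s.powersetCard j, μ.real {ω | ∀ k ∈ s \ A, φ k ω = 0} :=
        measureReal_biUnion_finset_le _ _
    _ ≤ ∑ A ∈ s.powersetCard j, q ^ (#s - j) := sum_le_sum fun A hA => by
        obtain ⟨hAs, hAj⟩ := mem_powersetCard.1 hA
        simpa [card_sdiff_of_subset hAs, hAj] using hq (s \ A)
    _ = (#s).choose j * q ^ (#s - j) := by simp

end

theorem stmt5_general {Ω : Type*} {F : MeasurableSpace Ω} (P : Measure Ω) [IsProbabilityMeasure P]
    (H : ℕ → MeasurableSpace Ω) (hHle : ∀ k, H k ≤ F) (hHmono : Monotone H)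
    (p : ℝ) (hp1 : p ≤ 1)
    (φ : ℕ → Ω → ℝ) (hφ01 : ∀ k ω, φ k ω = 0 ∨ φ k ω = 1)
    (hadapted : ∀ k, Measurable[H k] (φ k))
    (hcond : ∀ k : ℕ,
      (fun _ => p) ≤ᵐ[P]
        MeasureTheory.condExp (Nat.casesOn k (⊥ : MeasurableSpace Ω) H) P (φ k)) :
    ∀ N : ℕ, 1 ≤ N → ∀ m : ℕ, m ≤ N →
      P {ω | ∑ k ∈ Finset.range N, φ k ω = (m : ℝ)}
        ≤ ENNReal.ofReal ((N.choose m : ℝ) * (1 - p) ^ (N - m)) := by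
  intro N _ m _
  set G : ℕ → MeasurableSpace Ω := fun n => Nat.casesOn n ⊥ H
  have hG : ∀ n, G n ≤ F := by
    rintro (_ | n)
    exacts [bot_le, hHle n]
  have hφ_meas : ∀ k n, k < n → Measurable[G n] (φ k) := by
    rintro k (_ | n) hkn
    exacts [absurd hkn k.not_lt_zero, (hadapted k).mono (hHmono (Nat.lt_succ_iff.1 hkn)) le_rfl]
  have hφ_int : ∀ n, Integrable (φ n) P := fun n =>
    (integrable_const (1 : ℝ)).mono' ((hadapted n).mono (hHle n) le_rfl).aestronglyMeasurable
      (ae_of_all _ fun ω => by rcases hφ01 n ω with h | h <;> simp [h])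
  have hφ_le : ∀ n ω, φ n ω ≤ 1 := fun n ω => by rcases hφ01 n ω with h | h <;> simp [h]
  have hbound := measureReal_sum_eq_le hφ01
    (measureReal_forall_eq_zero_le_pow hG hφ_meas hφ_int hφ_le hp1 hcond) (range N) m
  rw [card_range] at hbound
  exact (ENNReal.le_ofReal_iff_toReal_le (measure_ne_top _ _) (by positivity)).2 hbound

/-- If the `{0,1}`-valued variables `φ k` are adapted to the filtration `H` and satisfy
`E[φ k | H (k−1)] ≥ p` a.s. (with `H (−1)` the trivial σ-algebra), then
`P[∑_{k<N} φ k = m] ≤ (N choose m) (1 − p)^{N−m}`. -/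
theorem stmt5 {Ω : Type*} {F : MeasurableSpace Ω} (P : Measure Ω) [IsProbabilityMeasure P]
    (H : ℕ → MeasurableSpace Ω) (hHle : ∀ k, H k ≤ F) (hHmono : Monotone H)
    (p : ℝ) (hp0 : 0 ≤ p) (hp1 : p ≤ 1)
    (φ : ℕ → Ω → ℝ) (hφ01 : ∀ k ω, φ k ω = 0 ∨ φ k ω = 1)
    (hadapted : ∀ k, Measurable[H k] (φ k))
    (hcond : ∀ k : ℕ,
      (fun _ => p) ≤ᵐ[P]
        MeasureTheory.condExp (Nat.casesOn k (⊥ : MeasurableSpace Ω) H) P (φ k)) :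
    ∀ N : ℕ, 1 ≤ N → ∀ m : ℕ, m ≤ N →
      P {ω | ∑ k ∈ Finset.range N, φ k ω = (m : ℝ)}
        ≤ ENNReal.ofReal ((N.choose m : ℝ) * (1 - p) ^ (N - m)) :=
  stmt5_general P H hHle hHmono p hp1 φ hφ01 hadapted hcond
end

section
/- For every N ≥ 1 and every integer M with 0 ≤ M ≤ N, it holds that P[∑_{k=0}^{N−1} φ_k ≥ M] ≥ 1 − ∑_{m=0}^{M−1} (N choose m)·(1 − p)^{N−m}. (Paper's Proposition 6, with the conditional success-probability lower bound p = 2q^γ abstracted as a hypothesis.) -/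
/-!
Write `S N = ∑ k < N, φ k`, which is measurable for the σ-algebra before time `N`. The event
`S (N+1) < M+1` lies in `{S N < M} ∪ ({S N < M+1} ∩ {φ N = 0})`, and for a set `B` of the past
the defining property of conditional expectation gives `P(B ∩ {φ N = 0}) ≤ (1 - p) P(B)`. So
`P(S (N+1) < M+1) ≤ P(S N < M) + (1 - p) P(S N < M+1)`, and by Pascal's rule the bounds
`∑ m < M, (N choose m) (1 - p)^(N-m)` satisfy this recursion with equality.
-/

open MeasureTheory Finset

-- `P(Binomial(N, p) < M)` with each factor `p ^ m` bounded by `1`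
noncomputable def binomialTail (p : ℝ) (N M : ℕ) : ℝ :=
  ∑ m ∈ range M, (N.choose m : ℝ) * (1 - p) ^ (N - m)

namespace binomialTail

theorem zero_right (p : ℝ) (N : ℕ) : binomialTail p N 0 = 0 := by
  simp [binomialTail]

theorem zero_succ (p : ℝ) (M : ℕ) : binomialTail p 0 (M + 1) = 1 := by
  simp [binomialTail, sum_range_succ']

theorem succ_succ (p : ℝ) (N M : ℕ) :
    binomialTail p (N + 1) (M + 1)
      = binomialTail p N M + (1 - p) * binomialTail p N (M + 1) := by
  have pascal_term : ∀ m, (N.choose (m + 1) : ℝ) * (1 - p) ^ (N - m)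
      = (1 - p) * ((N.choose (m + 1) : ℝ) * (1 - p) ^ (N - (m + 1))) := by
    intro m
    rcases lt_or_ge m N with hm | hm
    · rw [show N - m = N - (m + 1) + 1 by omega]; ring
    · simp [Nat.choose_eq_zero_of_lt (Nat.lt_succ_of_le hm)]
  simp only [binomialTail, sum_range_succ' _ M, Nat.choose_succ_succ, Nat.cast_add, add_mul,
    sum_add_distrib, Nat.add_sub_add_right, pascal_term, mul_add, mul_sum]
  simp only [Nat.choose_zero_right, Nat.cast_one, one_mul, Nat.sub_zero, pow_succ]
  ring

end binomialTail

section

variable {Ω : Type*} {m m₀ : MeasurableSpace Ω} {μ : Measure Ω}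

theorem mul_measureReal_le_setIntegral_of_le_condExp [IsFiniteMeasure μ] (hm : m ≤ m₀)
    {f : Ω → ℝ} (hf : Integrable f μ) {c : ℝ} (hc : (fun _ => c) ≤ᵐ[μ] μ[f|m])
    {s : Set Ω} (hs : MeasurableSet[m] s) : c * μ.real s ≤ ∫ x in s, f x ∂μ := by
  calc c * μ.real s = ∫ _ in s, c ∂μ := by rw [setIntegral_const, smul_eq_mul, mul_comm]
    _ ≤ ∫ x in s, (μ[f|m]) x ∂μ :=
      setIntegral_mono_ae (integrableOn_const (measure_ne_top _ _))
        integrable_condExp.integrableOn hc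
    _ = ∫ x in s, f x ∂μ := setIntegral_condExp hm hf hs

theorem measureReal_inter_eq_zero_le_of_le_condExp [IsFiniteMeasure μ] (hm : m ≤ m₀)
    {φ : Ω → ℝ} (hφ : Measurable φ) (h01 : ∀ ω, φ ω = 0 ∨ φ ω = 1) {p : ℝ}
    (hp : (fun _ => p) ≤ᵐ[μ] μ[φ|m]) {s : Set Ω} (hs : MeasurableSet[m] s) :
    μ.real (s ∩ {ω | φ ω = 0}) ≤ (1 - p) * μ.real s := by
  have hφ_int : Integrable φ μ :=
    Integrable.of_bound hφ.aestronglyMeasurable 1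
      (ae_of_all _ fun ω => by rcases h01 ω with h | h <;> simp [h])
  have hzero : MeasurableSet {ω | φ ω = 0} := hφ (measurableSet_singleton 0)
  have h_indicator : {ω | φ ω = 0}.indicator 1 = fun ω => 1 - φ ω := by
    funext ω
    rcases h01 ω with h | h <;> simp [Set.indicator, h]
  have h_integral : μ.real (s ∩ {ω | φ ω = 0}) = μ.real s - ∫ ω in s, φ ω ∂μ := by
    rw [Set.inter_comm, ← measureReal_restrict_apply hzero, ← integral_indicator_one hzero,
      h_indicator, integral_sub (integrable_const 1) hφ_int.restrict, integral_const,
      smul_eq_mul, mul_one, measureReal_restrict_apply MeasurableSet.univ, Set.univ_inter]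
  have := mul_measureReal_le_setIntegral_of_le_condExp hm hφ_int hp hs
  linarith

theorem measureReal_sum_lt_le_binomialTail [IsProbabilityMeasure μ] {G : ℕ → MeasurableSpace Ω}
    (hG : ∀ k, G k ≤ m₀) {φ : ℕ → Ω → ℝ} (h01 : ∀ k ω, φ k ω = 0 ∨ φ k ω = 1)
    (hS : ∀ N, Measurable[G N] fun ω => ∑ k ∈ range N, φ k ω) {p : ℝ} (hp1 : p ≤ 1)
    (hcond : ∀ k, (fun _ => p) ≤ᵐ[μ] μ[φ k|G k]) (N M : ℕ) :
    μ.real {ω | ∑ k ∈ range N, φ k ω < M} ≤ binomialTail p N M := by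
  have hφ : ∀ k, Measurable (φ k) := fun k => by
    have hdiff : φ k = fun ω => ∑ i ∈ range (k + 1), φ i ω - ∑ i ∈ range k, φ i ω := by
      funext ω
      simp [sum_range_succ]
    rw [hdiff]
    exact ((hS (k + 1)).mono (hG _) le_rfl).sub ((hS k).mono (hG _) le_rfl)
  have hM_zero : ∀ N, μ.real {ω | ∑ k ∈ range N, φ k ω < (0 : ℕ)} ≤ binomialTail p N 0 := by
    intro N
    have hS_nonneg : ∀ ω, 0 ≤ ∑ k ∈ range N, φ k ω := fun ω =>
      sum_nonneg fun k _ => by rcases h01 k ω with h | h <;> simp [h]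
    have hempty : {ω | ∑ k ∈ range N, φ k ω < (0 : ℕ)} = ∅ :=
      Set.eq_empty_of_forall_notMem fun ω hω => (hS_nonneg ω).not_gt (by simpa using hω)
    rw [hempty, measureReal_empty, binomialTail.zero_right]
  induction N generalizing M with
  | zero =>
    rcases M with _ | M
    · exact hM_zero 0
    · rw [binomialTail.zero_succ]
      exact measureReal_le_one
  | succ N ih =>
    rcases M with _ | M
    · exact hM_zero (N + 1)
    have hsub : {ω | ∑ k ∈ range (N + 1), φ k ω < (M + 1 : ℕ)}
        ⊆ {ω | ∑ k ∈ range N, φ k ω < M}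
          ∪ ({ω | ∑ k ∈ range N, φ k ω < (M + 1 : ℕ)} ∩ {ω | φ N ω = 0}) := by
      intro ω hω
      simp only [Set.mem_ofPred_eq, sum_range_succ] at hω
      rcases h01 N ω with h | h
      · exact Or.inr ⟨by simpa [h] using hω, h⟩
      · left
        simp only [Set.mem_ofPred_eq, h, Nat.cast_succ] at hω ⊢
        linarith
    have hfail := measureReal_inter_eq_zero_le_of_le_condExp (hG N) (hφ N) (h01 N) (hcond N)
      (hS N (measurableSet_Iio (a := ((M + 1 : ℕ) : ℝ))))
    calc _ ≤ _ := measureReal_mono hsub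
      _ ≤ _ := measureReal_union_le _ _
      _ ≤ binomialTail p N M + (1 - p) * binomialTail p N (M + 1) :=
        add_le_add (ih M) (hfail.trans (mul_le_mul_of_nonneg_left (ih (M + 1)) (sub_nonneg.2 hp1)))
      _ = _ := (binomialTail.succ_succ p N M).symm

end

theorem stmt6_general {Ω : Type*} {F : MeasurableSpace Ω} (P : Measure Ω) [IsProbabilityMeasure P]
    (H : ℕ → MeasurableSpace Ω) (hHle : ∀ k, H k ≤ F) (hHmono : Monotone H)
    (p : ℝ) (hp1 : p ≤ 1)
    (φ : ℕ → Ω → ℝ) (hφ01 : ∀ k ω, φ k ω = 0 ∨ φ k ω = 1)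
    (hadapted : ∀ k, Measurable[H k] (φ k))
    (hcond : ∀ k : ℕ,
      (fun _ => p) ≤ᵐ[P]
        MeasureTheory.condExp (Nat.casesOn k (⊥ : MeasurableSpace Ω) H) P (φ k)) :
    ∀ N : ℕ, 1 ≤ N → ∀ M : ℕ, M ≤ N →
      ENNReal.ofReal (1 - ∑ m ∈ Finset.range M, (N.choose m : ℝ) * (1 - p) ^ (N - m))
        ≤ P {ω | (M : ℝ) ≤ ∑ k ∈ Finset.range N, φ k ω} := by
  intro N _ M _
  let G : ℕ → MeasurableSpace Ω := fun k => Nat.casesOn k ⊥ H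
  have hG : ∀ k, G k ≤ F := by
    rintro (_ | k)
    exacts [bot_le, hHle k]
  have hS : ∀ N, Measurable[G N] fun ω => ∑ k ∈ range N, φ k ω := by
    rintro (_ | N)
    · exact measurable_const
    · exact Finset.measurable_sum _ fun k hk =>
        (hadapted k).mono (hHmono (Nat.lt_succ_iff.1 (mem_range.1 hk))) le_rfl
  have htail := measureReal_sum_lt_le_binomialTail hG hφ01 hS hp1 hcond N M
  have hcompl : {ω | (M : ℝ) ≤ ∑ k ∈ range N, φ k ω} = {ω | ∑ k ∈ range N, φ k ω < M}ᶜ := by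
    ext; simp
  rw [hcompl, ← ofReal_measureReal, probReal_compl_eq_one_sub
    (measurableSet_lt ((hS N).mono (hG N) le_rfl) measurable_const)]
  exact ENNReal.ofReal_le_ofReal (by rw [binomialTail] at htail; linarith)

/-- Paper's Proposition 6 (abstracted): if the `{0,1}`-valued variables `φ k` are adapted to
the filtration `H` and satisfy `E[φ k | H (k−1)] ≥ p` a.s. (with `H (−1)` the trivial
σ-algebra), then `P[∑_{k<N} φ k ≥ M] ≥ 1 − ∑_{m<M} (N choose m) (1 − p)^{N−m}`. -/
theorem stmt6 {Ω : Type*} {F : MeasurableSpace Ω} (P : Measure Ω) [IsProbabilityMeasure P]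
    (H : ℕ → MeasurableSpace Ω) (hHle : ∀ k, H k ≤ F) (hHmono : Monotone H)
    (p : ℝ) (hp0 : 0 ≤ p) (hp1 : p ≤ 1)
    (φ : ℕ → Ω → ℝ) (hφ01 : ∀ k ω, φ k ω = 0 ∨ φ k ω = 1)
    (hadapted : ∀ k, Measurable[H k] (φ k))
    (hcond : ∀ k : ℕ,
      (fun _ => p) ≤ᵐ[P]
        MeasureTheory.condExp (Nat.casesOn k (⊥ : MeasurableSpace Ω) H) P (φ k)) :
    ∀ N : ℕ, 1 ≤ N → ∀ M : ℕ, M ≤ N →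
      ENNReal.ofReal (1 - ∑ m ∈ Finset.range M, (N.choose m : ℝ) * (1 - p) ^ (N - m))
        ≤ P {ω | (M : ℝ) ≤ ∑ k ∈ Finset.range N, φ k ω} :=
  stmt6_general P H hHle hHmono p hp1 φ hφ01 hadapted hcond
end
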